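/- arXiv:1810.10788 — 2 statements merged into one kernel-verified Lean document; each statement's English description precedes it below -/
import Mathlib

section
/- Let ε > 0, K = exp(-C/ε) entrywise, and M = diag(u) K diag(v) for entrywise positive u, v. Then for each (k,ℓ), the partial derivative of the map M ↦ trace(CᵀM) + ε D(M) at M in the (k,ℓ) coordinate equals ε (log u_k + log v_ℓ); i.e., the gradient of the regularized objective at such M lies in the span of row- and column-constant matrices. -/
/-!
The objective is separable: moving the single coordinate `m_{kℓ}` changes only the summand
`c_{kℓ} m + ε (m log m - m + 1)`, whose derivative is `c_{kℓ} + ε log m`. At the Sinkhorn form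
`m_{kℓ} = u_k e^{-c_{kℓ}/ε} v_ℓ` the logarithm is `log u_k - c_{kℓ}/ε + log v_ℓ`, and the cost
term cancels.
-/

open Real

theorem hasDerivAt_sum_update {ι 𝕜 F : Type*} [Fintype ι] [DecidableEq ι]
    [NontriviallyNormedField 𝕜] [NormedAddCommGroup F] [NormedSpace 𝕜 F]
    {φ : ι → 𝕜 → F} {x : ι → 𝕜} {j : ι} {d : F} (h : HasDerivAt (φ j) d (x j)) :
    HasDerivAt (fun t => ∑ i, φ i (if i = j then t else x i)) d (x j) := by
  have hsplit : (fun t => ∑ i, φ i (if i = j then t else x i)) =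
      fun t => φ j t + ∑ i ∈ {j}ᶜ, φ i (x i) := by
    funext t
    rw [Fintype.sum_eq_add_sum_compl j, if_pos rfl]
    congr 1
    refine Finset.sum_congr rfl fun i hi => ?_
    rw [if_neg (Finset.mem_compl.mp hi ∘ Finset.mem_singleton.mpr)]
  rw [hsplit]
  exact h.add_const _

theorem Real.hasDerivAt_mul_log_sub_add_one {x : ℝ} (hx : x ≠ 0) :
    HasDerivAt (fun s => s * log s - s + 1) (log x) x := by
  simpa using ((hasDerivAt_mul_log hx).sub (hasDerivAt_id x)).add_const 1

theorem Real.log_mul_exp_mul {a b c : ℝ} (ha : 0 < a) (hc : 0 < c) :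
    log (a * exp b * c) = log a + b + log c := by
  rw [log_mul (by positivity) hc.ne', log_mul ha.ne' (exp_pos b).ne', log_exp]

/-- At a matrix of Sinkhorn form `m_{kℓ} = u_k exp(-c_{kℓ}/ε) v_ℓ`, the partial
derivative of the entropy-regularized objective `M ↦ trace(CᵀM) + ε D(M)` in
the `(k,ℓ)` coordinate equals `ε (log u_k + log v_ℓ)`. -/
theorem regObjective_partial_deriv (n : ℕ) (C : Fin n → Fin n → ℝ)
    (ε : ℝ) (hε : 0 < ε) (u v : Fin n → ℝ)
    (hu : ∀ k, 0 < u k) (hv : ∀ l, 0 < v l)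
    (M : Fin n → Fin n → ℝ)
    (hM : ∀ k l, M k l = u k * Real.exp (-(C k l) / ε) * v l) :
    ∀ k l, HasDerivAt (fun t : ℝ =>
        (∑ k', ∑ l', C k' l' *
            (if (k', l') = (k, l) then t else M k' l')) +
          ε * ∑ k', ∑ l',
            ((if (k', l') = (k, l) then t else M k' l') *
                Real.log (if (k', l') = (k, l) then t else M k' l')
              - (if (k', l') = (k, l) then t else M k' l') + 1))
      (ε * (Real.log (u k) + Real.log (v l))) (M k l) := by
  intro k l
  have hlog : log (M k l) = log (u k) + -C k l / ε + log (v l) := by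
    rw [hM, log_mul_exp_mul (hu k) (hv l)]
  have hMpos : 0 < M k l := by
    rw [hM]
    exact mul_pos (mul_pos (hu k) (exp_pos _)) (hv l)
  have hcost := hasDerivAt_sum_update (φ := fun p s => C p.1 p.2 * s)
    (x := fun p => M p.1 p.2) (j := (k, l)) ((hasDerivAt_id _).const_mul (C k l))
  have hentropy := hasDerivAt_sum_update (φ := fun _ s => s * log s - s + 1)
    (x := fun p => M p.1 p.2) (j := (k, l)) (hasDerivAt_mul_log_sub_add_one hMpos.ne')
  have hsum := hcost.fun_add (hentropy.const_mul ε)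
  simp only [Fintype.sum_prod_type] at hsum
  refine hsum.congr_deriv ?_
  rw [hlog]
  field_simp
  ring
end

section
/- Uniqueness of Sinkhorn scalings up to a common constant: if diag(u) K diag(v) = diag(u') K diag(v') for entrywise positive vectors u, v, u', v' and a matrix K with strictly positive entries, then there exists t > 0 with u' = t u and v' = v / t. -/
/-! Cancelling the positive entries of `K` turns the hypothesis into the equality `u vᵀ = u' v'ᵀ`
of rank-one matrices; comparing one row and one column of it with index `i` gives `t = u' i / u i`. -/

section RankOne

variable {ι 𝕜 : Type*} [Field 𝕜] {u v u' v' : ι → 𝕜}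

theorem eq_div_mul_of_outer_eq (h : ∀ k l, u k * v l = u' k * v' l) {i : ι} (hu : u i ≠ 0)
    (hv' : v' i ≠ 0) (k : ι) : u' k = u' i / u i * u k := by
  field_simp
  apply mul_right_cancel₀ hv'
  linear_combination u k * h i i - u i * h k i

theorem eq_div_div_of_outer_eq (h : ∀ k l, u k * v l = u' k * v' l) {i : ι} (hu' : u' i ≠ 0)
    (l : ι) : v' l = v l / (u' i / u i) := by
  field_simp
  linear_combination -h i l

theorem exists_pos_eq_mul_and_eq_div_of_outer_eq [LinearOrder 𝕜] [IsStrictOrderedRing 𝕜]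
    (h : ∀ k l, u k * v l = u' k * v' l) (hu : ∀ k, 0 < u k) (hu' : ∀ k, 0 < u' k)
    (hv' : ∀ l, v' l ≠ 0) :
    ∃ t : 𝕜, 0 < t ∧ (∀ k, u' k = t * u k) ∧ ∀ l, v' l = v l / t := by
  rcases isEmpty_or_nonempty ι with _ | ⟨⟨i⟩⟩
  · exact ⟨1, one_pos, isEmptyElim, isEmptyElim⟩
  · exact ⟨u' i / u i, div_pos (hu' i) (hu i), eq_div_mul_of_outer_eq h (hu i).ne' (hv' i),
      eq_div_div_of_outer_eq h (hu' i).ne'⟩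

end RankOne

theorem sinkhorn_scaling_unique_general (n : ℕ)
    (K : Fin n → Fin n → ℝ) (hK : ∀ k l, 0 < K k l)
    (u v u' v' : Fin n → ℝ)
    (hu : ∀ k, 0 < u k)
    (hu' : ∀ k, 0 < u' k) (hv' : ∀ l, 0 < v' l)
    (heq : ∀ k l, u k * K k l * v l = u' k * K k l * v' l) :
    ∃ t : ℝ, 0 < t ∧ (∀ k, u' k = t * u k) ∧ (∀ l, v' l = v l / t) := by
  have houter : ∀ k l, u k * v l = u' k * v' l := fun k l ↦
    mul_right_cancel₀ (hK k l).ne' (by linear_combination heq k l)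
  exact exists_pos_eq_mul_and_eq_div_of_outer_eq houter hu hu' fun l ↦ (hv' l).ne'

/-- Uniqueness of Sinkhorn scalings up to a common constant: if
`diag(u) K diag(v) = diag(u') K diag(v')` with `K` entrywise positive and
`u, v, u', v'` entrywise positive, then `u' = t u` and `v' = v / t` for some
`t > 0`. -/
theorem sinkhorn_scaling_unique (n : ℕ) (hn : 1 ≤ n)
    (K : Fin n → Fin n → ℝ) (hK : ∀ k l, 0 < K k l)
    (u v u' v' : Fin n → ℝ)
    (hu : ∀ k, 0 < u k) (hv : ∀ l, 0 < v l)
    (hu' : ∀ k, 0 < u' k) (hv' : ∀ l, 0 < v' l)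
    (heq : ∀ k l, u k * K k l * v l = u' k * K k l * v' l) :
    ∃ t : ℝ, 0 < t ∧ (∀ k, u' k = t * u k) ∧ (∀ l, v' l = v l / t) :=
  sinkhorn_scaling_unique_general n K hK u v u' v' hu hu' hv' heq
end
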